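/- arXiv:2412.17336 — 3 statements merged into one kernel-verified Lean document; each statement's English description precedes it below -/
import Mathlib

section
/- Let γ be a real number with 0 < γ < 1, let A > 0 and B > 0 be real numbers, let a be a natural number with a ≥ 1, and let b be a real number. Then A·(γ^b − γ^(a+b)) < B·(1 − γ^b) if and only if b > log_γ( 1 / ((A/B)·(1 − γ^a) + 1) ), where γ^b and γ^(a+b) denote real exponentiation (rpow) and log_γ denotes the logarithm with base γ. -/
open Real

/-- Algebraic core of the adaptation theorems: for a decay factor `0 < γ < 1`,
positive `A, B`, `a ≥ 1` old queries and `b` new queries,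
`A·(γ^b − γ^(a+b)) < B·(1 − γ^b)` iff `b > log_γ(1/((A/B)·(1−γ^a)+1))`. -/
theorem adaptation_inequality_iff (γ A B : ℝ) (hγ0 : 0 < γ) (hγ1 : γ < 1)
    (hA : 0 < A) (hB : 0 < B) (a : ℕ) (ha : 1 ≤ a) (b : ℝ) :
    A * (γ ^ b - γ ^ ((a : ℝ) + b)) < B * (1 - γ ^ b) ↔
      b > Real.logb γ (1 / (A / B * (1 - γ ^ (a : ℝ)) + 1)) := by
  have hγa1 : γ ^ (a : ℝ) < 1 :=
    Real.rpow_lt_one hγ0.le hγ1 (by exact_mod_cast Nat.lt_of_lt_of_le Nat.zero_lt_one ha)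
  have hγa0 : 0 < γ ^ (a : ℝ) := Real.rpow_pos_of_pos hγ0 _
  have hγb0 : 0 < γ ^ b := Real.rpow_pos_of_pos hγ0 _
  set c : ℝ := 1 / (A / B * (1 - γ ^ (a : ℝ)) + 1) with hc
  have hden : 0 < A * (1 - γ ^ (a : ℝ)) + B := by nlinarith
  have hceq : c = B / (A * (1 - γ ^ (a : ℝ)) + B) := by
    rw [hc]; field_simp
  have hc0 : 0 < c := by rw [hceq]; positivity
  have hrhs : b > Real.logb γ c ↔ γ ^ b < c := by
    conv_rhs => rw [← Real.rpow_logb hγ0 hγ1.ne hc0]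
    exact (Real.rpow_lt_rpow_left_iff_of_base_lt_one hγ0 hγ1).symm
  rw [hrhs, hceq, lt_div_iff₀ hden, Real.rpow_add hγ0]
  constructor <;> intro h <;> nlinarith
end

section
/- Let α, c_u, c_v be real numbers with 0 < α·c_u < 1 and 0 < α·c_v < 1, let d be a natural number, and set A = (1 − (α·c_u)^(d+1))/(1 − α·c_u) and B = (1 − (α·c_v)^(d+1))/(1 − α·c_v). Let γ ∈ (0,1), let a be a natural number with a ≥ 1, and let b be a real number. Then A > 0, B > 0, and A·(γ^b − γ^(a+b)) < B·(1 − γ^b) holds if and only if b > log_γ( 1 / ((A/B)·(1 − γ^a) + 1) ). In particular, APEX²-N adapts from topic U (with connectivity c_u, queried a times) to topic V (with connectivity c_v) after log_γ(1/((A/B)(1−γ^a)+1)) queries. -/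
open Real

/-- Theorem 4.4 (Effectiveness of APEX²-N): with `A = (1−(αc_u)^(d+1))/(1−αc_u)` and
`B = (1−(αc_v)^(d+1))/(1−αc_v)`, both are positive, and the new topic's accumulated
interest exceeds the (decayed) old topic's interest, i.e.
`A·(γ^b − γ^(a+b)) < B·(1 − γ^b)`, iff `b > log_γ(1/((A/B)·(1−γ^a)+1))`. -/
theorem apexN_effectiveness (α cu cv : ℝ)
    (hu0 : 0 < α * cu) (hu1 : α * cu < 1)
    (hv0 : 0 < α * cv) (hv1 : α * cv < 1)
    (d : ℕ) (A B : ℝ)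
    (hAdef : A = (1 - (α * cu) ^ (d + 1)) / (1 - α * cu))
    (hBdef : B = (1 - (α * cv) ^ (d + 1)) / (1 - α * cv))
    (γ : ℝ) (hγ0 : 0 < γ) (hγ1 : γ < 1) (a : ℕ) (ha : 1 ≤ a) (b : ℝ) :
    0 < A ∧ 0 < B ∧
      (A * (γ ^ b - γ ^ ((a : ℝ) + b)) < B * (1 - γ ^ b) ↔
        b > Real.logb γ (1 / (A / B * (1 - γ ^ (a : ℝ)) + 1))) := by
  have hA : 0 < A := by
    rw [hAdef]
    have h1 : (α * cu) ^ (d + 1) < 1 := pow_lt_one₀ hu0.le hu1 (Nat.succ_ne_zero d)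
    have h2 : 0 < 1 - α * cu := by linarith
    exact div_pos (by linarith) h2
  have hB : 0 < B := by
    rw [hBdef]
    have h1 : (α * cv) ^ (d + 1) < 1 := pow_lt_one₀ hv0.le hv1 (Nat.succ_ne_zero d)
    have h2 : 0 < 1 - α * cv := by linarith
    exact div_pos (by linarith) h2
  refine ⟨hA, hB, ?_⟩
  have hapos : (0 : ℝ) < (a : ℝ) := by
    have : (1 : ℝ) ≤ (a : ℝ) := by exact_mod_cast ha
    linarith
  have hga : γ ^ (a : ℝ) < 1 :=
    Real.rpow_lt_one hγ0.le hγ1 hapos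
  have hgb : 0 < γ ^ b := Real.rpow_pos_of_pos hγ0 b
  have hD : 0 < A / B * (1 - γ ^ (a : ℝ)) + 1 := by
    have : 0 < A / B := div_pos hA hB
    nlinarith
  have hR : 0 < 1 / (A / B * (1 - γ ^ (a : ℝ)) + 1) := by positivity
  rw [gt_iff_lt, Real.logb_lt_iff_lt_rpow_of_base_lt_one hγ0 hγ1 hR]
  have hsplit : γ ^ ((a : ℝ) + b) = γ ^ (a : ℝ) * γ ^ b := Real.rpow_add hγ0 _ _
  rw [hsplit]
  have hDB : 0 < A * (1 - γ ^ (a : ℝ)) + B := by nlinarith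
  have hRe : 1 / (A / B * (1 - γ ^ (a : ℝ)) + 1) = B / (A * (1 - γ ^ (a : ℝ)) + B) := by
    rw [div_eq_div_iff (ne_of_gt hD) (ne_of_gt hDB)]
    field_simp
  rw [hRe, lt_div_iff₀ hDB]
  constructor
  · intro h; nlinarith
  · intro h; nlinarith
end

section
/- Let α, c_u, c_v be real numbers with 0 < α·c_u < 1 and 0 < α·c_v < 1, let d, E_u, T_u, E_v, T_v be natural numbers with E_u + 3·T_u > 0, and set A = ((1 − (α·c_u)^(d+1))/(1 − α·c_u))^((E_u + 2·T_u)/(E_u + 3·T_u)) and B = ((1 − (α·c_v)^(d+1))/(1 − α·c_v))^((E_v + 2·T_v)/(E_v + 2·T_v)), where the outer exponentiations are real-power (rpow) with real exponents. Let γ ∈ (0,1), let a be a natural number with a ≥ 1, and let b be a real number. Then A > 0, B > 0, and A·(γ^b − γ^(a+b)) < B·(1 − γ^b) holds if and only if b > log_γ( 1 / ((A/B)·(1 − γ^a) + 1) ). In particular, APEX² adapts from topic U to topic V after log_γ(1/((A/B)(1−γ^a)+1)) queries. -/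
open Real

/-- Theorem 4.2 (Effectiveness of APEX²): with
`A = ((1−(αc_u)^(d+1))/(1−αc_u))^((E_u+2T_u)/(E_u+3T_u))` and
`B = ((1−(αc_v)^(d+1))/(1−αc_v))^((E_v+2T_v)/(E_v+2T_v))` (outer powers are rpow),
both are positive, and `A·(γ^b − γ^(a+b)) < B·(1 − γ^b)` holds iff
`b > log_γ(1/((A/B)·(1−γ^a)+1))`. -/
theorem apex_effectiveness (α cu cv : ℝ)
    (hu0 : 0 < α * cu) (hu1 : α * cu < 1)
    (hv0 : 0 < α * cv) (hv1 : α * cv < 1)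
    (d Eu Tu Ev Tv : ℕ) (hET : 0 < Eu + 3 * Tu) (A B : ℝ)
    (hAdef : A = ((1 - (α * cu) ^ (d + 1)) / (1 - α * cu)) ^
        (((Eu : ℝ) + 2 * (Tu : ℝ)) / ((Eu : ℝ) + 3 * (Tu : ℝ))))
    (hBdef : B = ((1 - (α * cv) ^ (d + 1)) / (1 - α * cv)) ^
        (((Ev : ℝ) + 2 * (Tv : ℝ)) / ((Ev : ℝ) + 2 * (Tv : ℝ))))
    (γ : ℝ) (hγ0 : 0 < γ) (hγ1 : γ < 1) (a : ℕ) (ha : 1 ≤ a) (b : ℝ) :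
    0 < A ∧ 0 < B ∧
      (A * (γ ^ b - γ ^ ((a : ℝ) + b)) < B * (1 - γ ^ b) ↔
        b > Real.logb γ (1 / (A / B * (1 - γ ^ (a : ℝ)) + 1))) := by
  have hA : 0 < A := by
    rw [hAdef]
    apply Real.rpow_pos_of_pos
    have h := pow_lt_one₀ hu0.le hu1 (by omega : d + 1 ≠ 0)
    exact div_pos (by linarith) (by linarith)
  have hB : 0 < B := by
    rw [hBdef]
    apply Real.rpow_pos_of_pos
    have h := pow_lt_one₀ hv0.le hv1 (by omega : d + 1 ≠ 0)
    exact div_pos (by linarith) (by linarith)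
  have hga : (0:ℝ) < γ ^ (a:ℝ) := Real.rpow_pos_of_pos hγ0 _
  have hga1 : γ ^ (a:ℝ) < 1 := by
    apply Real.rpow_lt_one hγ0.le hγ1
    exact_mod_cast Nat.lt_of_lt_of_le Nat.zero_lt_one ha
  have hgb : (0:ℝ) < γ ^ b := Real.rpow_pos_of_pos hγ0 _
  have hD : 0 < A * (1 - γ ^ (a:ℝ)) + B := by
    have := mul_pos hA (by linarith : (0:ℝ) < 1 - γ ^ (a:ℝ))
    linarith
  have hr : (0:ℝ) < 1 / (A / B * (1 - γ ^ (a:ℝ)) + 1) := by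
    apply div_pos one_pos
    have := mul_pos (div_pos hA hB) (by linarith : (0:ℝ) < 1 - γ ^ (a:ℝ))
    linarith
  have heq : 1 / (A / B * (1 - γ ^ (a:ℝ)) + 1) = B / (A * (1 - γ ^ (a:ℝ)) + B) := by
    field_simp
  refine ⟨hA, hB, ?_⟩
  rw [Real.rpow_add hγ0, gt_iff_lt,
    Real.logb_lt_iff_lt_rpow_of_base_lt_one hγ0 hγ1 hr, heq, lt_div_iff₀ hD]
  constructor <;> intro h <;> nlinarith
end
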